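/- arXiv:2004.04484 — 12 statements merged into one kernel-verified Lean document; each statement's English description precedes it below -/
import Mathlib

section
/- Let g > 0, ε > 0, h_L > 0, h_R > 0 and u_L, u_R ∈ ℝ. Set q_L = h_L u_L, q_R = h_R u_R, λ_L = min(−|u_L| − √(g h_L), −|u_R| − √(g h_R), −ε) and λ_R = max(|u_L| + √(g h_L), |u_R| + √(g h_R), ε). Then λ_L < 0 < λ_R and the HLL intermediate height h_HLL := (λ_R h_R − λ_L h_L − (q_R − q_L))/(λ_R − λ_L) is strictly positive. -/
/-- With the characteristic velocities
`λ_L = min(−|u_L| − √(g h_L), −|u_R| − √(g h_R), −ε)` and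
`λ_R = max(|u_L| + √(g h_L), |u_R| + √(g h_R), ε)`, one has `λ_L < 0 < λ_R`
and the HLL intermediate height
`h_HLL = (λ_R h_R − λ_L h_L − (q_R − q_L))/(λ_R − λ_L)` is strictly positive. -/
theorem hll_intermediate_height_pos (g ε hL hR uL uR : ℝ)
    (hg : 0 < g) (hε : 0 < ε) (hhL : 0 < hL) (hhR : 0 < hR) :
    let qL := hL * uL
    let qR := hR * uR
    let lamL := min (min (-|uL| - Real.sqrt (g * hL)) (-|uR| - Real.sqrt (g * hR))) (-ε)
    let lamR := max (max (|uL| + Real.sqrt (g * hL)) (|uR| + Real.sqrt (g * hR))) ε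
    lamL < 0 ∧ 0 < lamR ∧
      0 < (lamR * hR - lamL * hL - (qR - qL)) / (lamR - lamL) := by
  intro qL qR lamL lamR
  have hsL : 0 < Real.sqrt (g * hL) := Real.sqrt_pos.mpr (by positivity)
  have hsR : 0 < Real.sqrt (g * hR) := Real.sqrt_pos.mpr (by positivity)
  have hL0 : lamL < 0 := lt_of_le_of_lt (min_le_right _ _) (by linarith)
  have hR0 : 0 < lamR := lt_of_lt_of_le hε (le_max_right _ _)
  refine ⟨hL0, hR0, ?_⟩
  have h1 : lamL < uL := by
    have : lamL ≤ -|uL| - Real.sqrt (g * hL) :=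
      le_trans (min_le_left _ _) (min_le_left _ _)
    have := neg_abs_le uL
    linarith
  have h2 : uR < lamR := by
    have : |uR| + Real.sqrt (g * hR) ≤ lamR :=
      le_trans (le_max_right _ _) (le_max_left _ _)
    have := le_abs_self uR
    linarith
  have hnum : 0 < lamR * hR - lamL * hL - (qR - qL) := by
    have e1 : 0 < hR * (lamR - uR) := mul_pos hhR (by linarith)
    have e2 : 0 < hL * (uL - lamL) := mul_pos hhL (by linarith)
    simp only [qL, qR]
    nlinarith
  exact div_pos hnum (by linarith)
end

section
/- Let Δt > 0, Δx > 0, and real numbers h ≥ 0, a ≥ 0, b ≥ 0, λ⁻ ≤ 0, λ⁺ ≥ 0 with Δt · max(−λ⁻, λ⁺) ≤ Δx/2. Then the updated value h − (Δt/Δx)(λ⁻(a − h) − λ⁺(b − h)) is nonnegative. -/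
/-- Robustness of the Godunov-type update: under the CFL condition
`Δt · max (−λ⁻, λ⁺) ≤ Δx/2`, the updated water height
`h − (Δt/Δx)(λ⁻(a − h) − λ⁺(b − h))` is nonnegative whenever
`h, a, b ≥ 0`, `λ⁻ ≤ 0` and `λ⁺ ≥ 0`. -/
theorem godunov_update_nonneg (Δt Δx h a b lamNeg lamPos : ℝ)
    (hΔt : 0 < Δt) (hΔx : 0 < Δx) (hh : 0 ≤ h) (ha : 0 ≤ a) (hb : 0 ≤ b)
    (hlamNeg : lamNeg ≤ 0) (hlamPos : 0 ≤ lamPos)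
    (hCFL : Δt * max (-lamNeg) lamPos ≤ Δx / 2) :
    0 ≤ h - Δt / Δx * (lamNeg * (a - h) - lamPos * (b - h)) := by
  have h1 : Δt * (-lamNeg) ≤ Δx / 2 :=
    le_trans (by nlinarith [le_max_left (-lamNeg) lamPos]) hCFL
  have h2 : Δt * lamPos ≤ Δx / 2 :=
    le_trans (by nlinarith [le_max_right (-lamNeg) lamPos]) hCFL
  rw [div_mul_eq_mul_div, sub_nonneg, div_le_iff₀ hΔx]
  nlinarith [mul_nonneg (mul_nonneg hΔt.le (neg_nonneg.2 hlamNeg)) ha,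
    mul_nonneg (mul_nonneg hΔt.le hlamPos) hb,
    mul_nonneg hh (by linarith : 0 ≤ Δx - Δt * (lamPos - lamNeg))]
end

section
/- Let g > 0, h_L > 0, h_R > 0, λ_L < 0 < λ_R and q_0 ∈ ℝ. Set α := −q_0²/(h_L h_R) + (g/2)(h_L + h_R) and assume α ≠ 0. Define S̄Δx := q_0²(1/h_R − 1/h_L) + (g/2)(h_R² − h_L²), h_HLL := (λ_R h_R − λ_L h_L)/(λ_R − λ_L), q_HLL := q_0 − S̄Δx/(λ_R − λ_L), and the intermediate states q* := q_HLL + S̄Δx/(λ_R − λ_L), h_L* := min( max(h_HLL − λ_R S̄Δx/(α(λ_R − λ_L)), 0), (1 − λ_R/λ_L) h_HLL ), h_R* := min( max(h_HLL − λ_L S̄Δx/(α(λ_R − λ_L)), 0), (1 − λ_L/λ_R) h_HLL ). Then q* = q_0, h_L* = h_L and h_R* = h_R. -/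
/-- Well-balancedness of the intermediate states: at a discrete steady state
with constant discharge `q₀`, the intermediate states of the approximate
Riemann solver coincide with the left and right states: `q* = q₀`,
`h_L* = h_L` and `h_R* = h_R`. -/
theorem intermediate_states_well_balanced (g hL hR lamL lamR q₀ : ℝ)
    (hg : 0 < g) (hhL : 0 < hL) (hhR : 0 < hR)
    (hlamL : lamL < 0) (hlamR : 0 < lamR)
    (α SΔx hHLL qHLL qstar hLstar hRstar : ℝ)
    (hα : α = -q₀ ^ 2 / (hL * hR) + g / 2 * (hL + hR))
    (hα0 : α ≠ 0)
    (hS : SΔx = q₀ ^ 2 * (1 / hR - 1 / hL) + g / 2 * (hR ^ 2 - hL ^ 2))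
    (hHLLdef : hHLL = (lamR * hR - lamL * hL) / (lamR - lamL))
    (hqHLL : qHLL = q₀ - SΔx / (lamR - lamL))
    (hqstar : qstar = qHLL + SΔx / (lamR - lamL))
    (hhLstar : hLstar =
      min (max (hHLL - lamR * SΔx / (α * (lamR - lamL))) 0) ((1 - lamR / lamL) * hHLL))
    (hhRstar : hRstar =
      min (max (hHLL - lamL * SΔx / (α * (lamR - lamL))) 0) ((1 - lamL / lamR) * hHLL)) :
    qstar = q₀ ∧ hLstar = hL ∧ hRstar = hR := by
  have hlam : lamR - lamL > 0 := by linarith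
  have hlamne : lamR - lamL ≠ 0 := ne_of_gt hlam
  have hLne : hL ≠ 0 := ne_of_gt hhL
  have hRne : hR ≠ 0 := ne_of_gt hhR
  have hlamLne : lamL ≠ 0 := ne_of_lt hlamL
  have hlamRne : lamR ≠ 0 := ne_of_gt hlamR
  -- key identity: SΔx = (hR - hL) * α
  have hkey : SΔx = (hR - hL) * α := by
    rw [hS, hα]; field_simp; ring
  refine ⟨by rw [hqstar, hqHLL]; ring, ?_, ?_⟩
  · have h1 : hHLL - lamR * SΔx / (α * (lamR - lamL)) = hL := by
      rw [hHLLdef, hkey]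
      field_simp
      ring
    have h2 : (1 - lamR / lamL) * hHLL = hL - lamR * hR / lamL := by
      rw [hHLLdef]
      field_simp
      ring
    have h3 : lamR * hR / lamL ≤ 0 :=
      div_nonpos_of_nonneg_of_nonpos (mul_pos hlamR hhR).le hlamL.le
    rw [hhLstar, h1, max_eq_left hhL.le, h2, min_eq_left (by linarith)]
  · have h1 : hHLL - lamL * SΔx / (α * (lamR - lamL)) = hR := by
      rw [hHLLdef, hkey]
      field_simp
      ring
    have h2 : (1 - lamL / lamR) * hHLL = hR - lamL * hL / lamR := by
      rw [hHLLdef]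
      field_simp
    have h3 : lamL * hL / lamR ≤ 0 :=
      div_nonpos_of_nonpos_of_nonneg (by nlinarith) hlamR.le
    rw [hhRstar, h1, max_eq_left hhR.le, h2, min_eq_left (by linarith)]
end

section
/- Let ε > 0, L > 0, d ∈ ℕ, and κ ∈ ℕ with κ ≥ d + 1. Then for all Δx ∈ (0, L], the convex combination parameter θ(Δx) := ε/(ε + (Δx/L)^κ) satisfies |θ(Δx) − 1| ≤ Δx^{d+1}/(ε L^{d+1}). In particular θ(Δx) = 1 + O(Δx^{d+1}) as Δx → 0⁺. -/
/-! Writing `r = Δx / L ∈ (0, 1]`, one has `1 - θ = r^κ / (ε + r^κ) ≤ r^κ / ε`, and `r^κ ≤ r^(d+1)`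
because `r ≤ 1` and `κ ≥ d + 1`. -/

theorem abs_div_add_sub_one_le {K : Type*} [Field K] [LinearOrder K] [IsStrictOrderedRing K]
    {a b : K} (ha : 0 < a) (hb : 0 ≤ b) : |a / (a + b) - 1| ≤ b / a := by
  have hab : 0 < a + b := add_pos_of_pos_of_nonneg ha hb
  have hdiff : a / (a + b) - 1 = -(b / (a + b)) := by
    field_simp
    ring
  rw [hdiff, abs_neg, abs_of_nonneg (div_nonneg hb hab.le)]
  exact div_le_div_of_nonneg_left hb ha (le_add_of_nonneg_right hb)

/-- Away from steady states, the convex combination parameter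
`θ(Δx) = ε/(ε + (Δx/L)^κ)` with `κ ≥ d + 1` is an approximation of `1` up to
order `Δx^{d+1}`: `|θ(Δx) − 1| ≤ Δx^{d+1}/(ε L^{d+1})` for all `Δx ∈ (0, L]`. -/
theorem theta_high_order_approx_of_one (ε L : ℝ) (d κ : ℕ)
    (hε : 0 < ε) (hL : 0 < L) (hκ : d + 1 ≤ κ) :
    ∀ Δx : ℝ, 0 < Δx → Δx ≤ L →
      |ε / (ε + (Δx / L) ^ κ) - 1| ≤ Δx ^ (d + 1) / (ε * L ^ (d + 1)) := by
  intro Δx hx hxL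
  have hr0 : 0 ≤ Δx / L := div_nonneg hx.le hL.le
  have hr1 : Δx / L ≤ 1 := (div_le_one hL).mpr hxL
  calc |ε / (ε + (Δx / L) ^ κ) - 1|
      ≤ (Δx / L) ^ κ / ε := abs_div_add_sub_one_le hε (pow_nonneg hr0 κ)
    _ ≤ (Δx / L) ^ (d + 1) / ε :=
      div_le_div_of_nonneg_right (pow_le_pow_of_le_one hr0 hr1 hκ) hε.le
    _ = Δx ^ (d + 1) / (ε * L ^ (d + 1)) := by rw [div_pow, div_div, mul_comm]
end

section
/- Let g > 0, h_L > 0, h_R > 0 with h_L ≠ h_R, and Z_L, Z_R, q_0 ∈ ℝ. Assume the discrete Bernoulli relation (q_0²/2)(1/h_R² − 1/h_L²) + g((h_R + Z_R) − (h_L + Z_L)) = 0. Then q_0²(1/h_R − 1/h_L) + (g/2)(h_R² − h_L²) = −2g(Z_R − Z_L) h_L h_R/(h_L + h_R) + (g/2)(h_R − h_L)³/(h_L + h_R). -/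
/-- Elimination of `q₀²` via the discrete Bernoulli relation: if
`(q₀²/2)(1/h_R² − 1/h_L²) + g((h_R + Z_R) − (h_L + Z_L)) = 0`, then the
momentum flux jump equals
`−2g(Z_R − Z_L) h_L h_R/(h_L + h_R) + (g/2)(h_R − h_L)³/(h_L + h_R)`. -/
theorem topography_source_average_formula (g hL hR ZL ZR q₀ : ℝ)
    (hg : 0 < g) (hhL : 0 < hL) (hhR : 0 < hR) (hne : hL ≠ hR)
    (hbernoulli : q₀ ^ 2 / 2 * (1 / hR ^ 2 - 1 / hL ^ 2) +
      g * ((hR + ZR) - (hL + ZL)) = 0) :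
    q₀ ^ 2 * (1 / hR - 1 / hL) + g / 2 * (hR ^ 2 - hL ^ 2) =
      -2 * g * (ZR - ZL) * (hL * hR) / (hL + hR) +
        g / 2 * (hR - hL) ^ 3 / (hL + hR) := by
  have hL0 : hL ≠ 0 := ne_of_gt hhL
  have hR0 : hR ≠ 0 := ne_of_gt hhR
  have hs : hL + hR ≠ 0 := by positivity
  field_simp at hbernoulli ⊢
  nlinarith [hbernoulli, sq_nonneg q₀, mul_pos hhL hhR]
end

section
/- Let g > 0, k > 0, η = 7/3, Δx > 0, h_L > 0, h_R > 0 with h_L ≠ h_R, and q_0 ≠ 0 with μ = sgn(q_0). Assume the discrete algebraic friction steady relation −(q_0²/(η−1))(h_R^{η−1} − h_L^{η−1}) + (g/(η+2))(h_R^{η+2} − h_L^{η+2}) = −k q_0 |q_0| Δx. Define H := ((h_R² − h_L²)/2)·(η+2)/(h_R^{η+2} − h_L^{η+2}) − (μ/(k Δx))·( (1/h_R − 1/h_L) + ((h_R² − h_L²)/2)·((h_R^{η−1} − h_L^{η−1})/(η−1))·((η+2)/(h_R^{η+2} − h_L^{η+2})) ). Then q_0²(1/h_R − 1/h_L) + (g/2)(h_R²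 − h_L²) + k q_0 |q_0| H Δx = 0, i.e. the discrete steady relation with friction holds with the average h̄^{−η} = H. -/
/-!
Write `K = k q₀|q₀| Δx`. Since `sgn(q₀)|q₀| = q₀`, multiplying the second term of `H` by `K`
gives `q₀²` times the bracket, while the discrete algebraic relation says
`K (η+2)/[h^{η+2}] = q₀² [h^{η-1}]/(η-1) · (η+2)/[h^{η+2}] - g`. Substituting both into `K H`,
the `q₀² [h^{η-1}]` contributions cancel and what is left is `-q₀²[1/h] - (g/2)[h²]`.
-/

theorem Real.sign_mul_abs (x : ℝ) : Real.sign x * |x| = x := by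
  rcases lt_trichotomy x 0 with hx | rfl | hx
  · rw [Real.sign_of_neg hx, abs_of_neg hx]; ring
  · simp
  · rw [Real.sign_of_pos hx, abs_of_pos hx]; ring

theorem Real.rpow_sub_rpow_ne_zero {x y p : ℝ} (hx : 0 ≤ x) (hy : 0 ≤ y) (hxy : x ≠ y)
    (hp : p ≠ 0) : y ^ p - x ^ p ≠ 0 :=
  sub_ne_zero.mpr fun h => hxy (Real.rpow_left_inj hy hx hp |>.mp h).symm

/-- `A` stands for `[h^{η-1}]/(η-1)`, `D` for `[h^{η+2}]`, `p` for `η+2`, `s` for `[1/h]` and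
`t` for `[h²]`. -/
theorem steady_relation_of_algebraic_relation {g k Δx q μ s t A D p : ℝ}
    (hk : k ≠ 0) (hΔx : Δx ≠ 0) (hp : p ≠ 0) (hD : D ≠ 0) (hμ : μ * |q| = q)
    (hrel : -q ^ 2 * A + g / p * D = -k * q * |q| * Δx) :
    q ^ 2 * s + g / 2 * t +
      k * q * |q| * (t / 2 * (p / D) - μ / (k * Δx) * (s + t / 2 * A * (p / D))) * Δx = 0 := by
  have friction_ratio : k * q * |q| * Δx * (p / D) = q ^ 2 * A * (p / D) - g := by
    rw [show k * q * |q| * Δx = q ^ 2 * A - g / p * D by linear_combination hrel]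
    field_simp
  have friction_sign : k * q * |q| * Δx * (μ / (k * Δx)) = q ^ 2 := by
    field_simp
    linear_combination q * hμ
  linear_combination t / 2 * friction_ratio - (s + t / 2 * A * (p / D)) * friction_sign

theorem friction_average_steady_relation_general (g k Δx hL hR q₀ η μ H : ℝ)
    (hk : 0 < k) (hΔx : 0 < Δx)
    (hhL : 0 < hL) (hhR : 0 < hR) (hne : hL ≠ hR)
    (hη : η = 7 / 3) (hμ : μ = Real.sign q₀)
    (hH : H =
      (hR ^ 2 - hL ^ 2) / 2 * ((η + 2) / (hR ^ (η + 2) - hL ^ (η + 2))) -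
        μ / (k * Δx) *
          ((1 / hR - 1 / hL) +
            (hR ^ 2 - hL ^ 2) / 2 * ((hR ^ (η - 1) - hL ^ (η - 1)) / (η - 1)) *
              ((η + 2) / (hR ^ (η + 2) - hL ^ (η + 2)))))
    (hsteady : -(q₀ ^ 2 / (η - 1)) * (hR ^ (η - 1) - hL ^ (η - 1)) +
      g / (η + 2) * (hR ^ (η + 2) - hL ^ (η + 2)) = -k * q₀ * |q₀| * Δx) :
    q₀ ^ 2 * (1 / hR - 1 / hL) + g / 2 * (hR ^ 2 - hL ^ 2) +
      k * q₀ * |q₀| * H * Δx = 0 := by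
  have hp : η + 2 ≠ 0 := by rw [hη]; norm_num
  have hD := Real.rpow_sub_rpow_ne_zero hhL.le hhR.le hne hp
  have key := steady_relation_of_algebraic_relation (g := g) (q := q₀)
    (s := 1 / hR - 1 / hL) (t := hR ^ 2 - hL ^ 2)
    (A := (hR ^ (η - 1) - hL ^ (η - 1)) / (η - 1)) hk.ne' hΔx.ne' hp hD
    (hμ ▸ Real.sign_mul_abs q₀) (by rw [← hsteady]; ring)
  rw [hH]
  linear_combination key

/-- The average `H` of `h^{−η}` obtained by eliminating `q₀²` through the
discrete algebraic friction relation satisfies the discrete steady relation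
with friction: `q₀²[1/h] + (g/2)[h²] + k q₀|q₀| H Δx = 0`. Here `η = 7/3`
and `μ = sgn(q₀)`. -/
theorem friction_average_steady_relation (g k Δx hL hR q₀ η μ H : ℝ)
    (hg : 0 < g) (hk : 0 < k) (hΔx : 0 < Δx)
    (hhL : 0 < hL) (hhR : 0 < hR) (hne : hL ≠ hR) (hq₀ : q₀ ≠ 0)
    (hη : η = 7 / 3) (hμ : μ = Real.sign q₀)
    (hH : H =
      (hR ^ 2 - hL ^ 2) / 2 * ((η + 2) / (hR ^ (η + 2) - hL ^ (η + 2))) -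
        μ / (k * Δx) *
          ((1 / hR - 1 / hL) +
            (hR ^ 2 - hL ^ 2) / 2 * ((hR ^ (η - 1) - hL ^ (η - 1)) / (η - 1)) *
              ((η + 2) / (hR ^ (η + 2) - hL ^ (η + 2)))))
    (hsteady : -(q₀ ^ 2 / (η - 1)) * (hR ^ (η - 1) - hL ^ (η - 1)) +
      g / (η + 2) * (hR ^ (η + 2) - hL ^ (η + 2)) = -k * q₀ * |q₀| * Δx) :
    q₀ ^ 2 * (1 / hR - 1 / hL) + g / 2 * (hR ^ 2 - hL ^ 2) +
      k * q₀ * |q₀| * H * Δx = 0 :=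
  friction_average_steady_relation_general g k Δx hL hR q₀ η μ H hk hΔx hhL hhR hne hη hμ hH hsteady
end

section
/- Let g > 0 and C > 0. Let h : ℝ → ℝ be continuous at x₀ with h(x₀) > 0 and h > 0 in a neighborhood of x₀, and let Z : ℝ → ℝ be differentiable at x₀. For Δx > 0 define the cut-off [h]_c(Δx) = h(x₀+Δx) − h(x₀) if |h(x₀+Δx) − h(x₀)| ≤ CΔx and [h]_c(Δx) = sgn(h(x₀+Δx) − h(x₀))·CΔx otherwise, and define S̄^t(Δx) := (1/Δx)·( −2g(Z(x₀+Δx) − Z(x₀))·h(x₀)h(x₀+Δx)/(h(x₀) + h(x₀+Δx)) + (g/2)·([h]_c(Δx))³/(h(x₀) + h(x₀+Δx)) ). Then S̄^t(Δx) → −g h(x₀) Z'(x₀) as Δx → 0⁺, i.e. the cut-off topography source average is consistent with the topography source term −g h ∂_x Z. -/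
open Filter Topology

/-- Consistency of the cut-off topography source average: the quantity
`S̄ᵗ(Δx) = (1/Δx)(−2g[Z] h_L h_R/(h_L + h_R) + (g/2)[h]_c³/(h_L + h_R))`,
computed between `x₀` and `x₀ + Δx` with the cut-off `[h]_c` at level `CΔx`,
tends to `−g h(x₀) Z'(x₀)` as `Δx → 0⁺`. -/
theorem topography_source_average_consistency (g C : ℝ) (h Z : ℝ → ℝ) (x₀ : ℝ)
    (hg : 0 < g) (hC : 0 < C)
    (hcont : ContinuousAt h x₀) (hpos : 0 < h x₀)
    (hnbhd : ∀ᶠ x in 𝓝 x₀, 0 < h x)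
    (hZ : DifferentiableAt ℝ Z x₀) :
    Tendsto
      (fun Δx : ℝ =>
        (1 / Δx) *
          (-2 * g * (Z (x₀ + Δx) - Z x₀) * (h x₀ * h (x₀ + Δx)) / (h x₀ + h (x₀ + Δx)) +
            g / 2 *
              (if |h (x₀ + Δx) - h x₀| ≤ C * Δx then h (x₀ + Δx) - h x₀
                else Real.sign (h (x₀ + Δx) - h x₀) * (C * Δx)) ^ 3 /
              (h x₀ + h (x₀ + Δx))))
      (𝓝[>] 0) (𝓝 (-g * h x₀ * deriv Z x₀)) := by
  have hL : 0 < h x₀ := hpos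
  -- continuity of Δx ↦ h (x₀ + Δx)
  have hf : Tendsto (fun Δx : ℝ => h (x₀ + Δx)) (𝓝[>] (0:ℝ)) (𝓝 (h x₀)) := by
    have h1 : ContinuousAt (fun Δx : ℝ => h (x₀ + Δx)) 0 :=
      ContinuousAt.comp (by simpa using hcont)
        ((continuous_const.add continuous_id).continuousAt)
    have h2 := h1.tendsto
    simp only [add_zero] at h2
    exact h2.mono_left nhdsWithin_le_nhds
  have hden : Tendsto (fun Δx : ℝ => h x₀ + h (x₀ + Δx)) (𝓝[>] (0:ℝ))
      (𝓝 (h x₀ + h x₀)) := tendsto_const_nhds.add hf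
  have hdenne : h x₀ + h x₀ ≠ 0 := by positivity
  -- slope limit
  have hslope : Tendsto (fun Δx : ℝ => (Z (x₀ + Δx) - Z x₀) / Δx) (𝓝[>] (0:ℝ))
      (𝓝 (deriv Z x₀)) := by
    have h1 := hZ.hasDerivAt
    rw [hasDerivAt_iff_tendsto_slope] at h1
    have h2 : Tendsto (fun Δx : ℝ => x₀ + Δx) (𝓝[>] (0:ℝ)) (𝓝[≠] x₀) := by
      apply tendsto_nhdsWithin_of_tendsto_nhds_of_eventually_within
      · have : Tendsto (fun Δx : ℝ => x₀ + Δx) (𝓝 (0:ℝ)) (𝓝 (x₀ + 0)) :=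
          (continuous_const.add continuous_id).continuousAt
        simpa using this.mono_left nhdsWithin_le_nhds
      · filter_upwards [self_mem_nhdsWithin] with Δx hΔx
        have : (0:ℝ) < Δx := hΔx
        simp only [Set.mem_compl_iff, Set.mem_singleton_iff]
        intro hc
        nlinarith [add_left_cancel (a := x₀) (b := Δx) (c := 0) (by linarith [hc] )]
    have h3 := h1.comp h2
    refine h3.congr fun Δx => ?_
    simp [Function.comp, slope_def_field]
  -- first term
  have hA : Tendsto (fun Δx : ℝ =>
      ((Z (x₀ + Δx) - Z x₀) / Δx) *
        (-2 * g * (h x₀ * h (x₀ + Δx)) / (h x₀ + h (x₀ + Δx)))) (𝓝[>] (0:ℝ))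
      (𝓝 (-g * h x₀ * deriv Z x₀)) := by
    have hmul : Tendsto (fun Δx : ℝ =>
        -2 * g * (h x₀ * h (x₀ + Δx)) / (h x₀ + h (x₀ + Δx))) (𝓝[>] (0:ℝ))
        (𝓝 (-2 * g * (h x₀ * h x₀) / (h x₀ + h x₀))) :=
      (tendsto_const_nhds.mul (tendsto_const_nhds.mul hf)).div hden hdenne
    have := hslope.mul hmul
    have hval : deriv Z x₀ * (-2 * g * (h x₀ * h x₀) / (h x₀ + h x₀))
        = -g * h x₀ * deriv Z x₀ := by
      field_simp
      ring
    rwa [hval] at this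
  -- cut-off term
  have hcut : Tendsto (fun Δx : ℝ =>
      (if |h (x₀ + Δx) - h x₀| ≤ C * Δx then h (x₀ + Δx) - h x₀
        else Real.sign (h (x₀ + Δx) - h x₀) * (C * Δx)) ^ 3 / Δx) (𝓝[>] (0:ℝ))
      (𝓝 0) := by
    have hsign : ∀ t : ℝ, |Real.sign t| ≤ 1 := by
      intro t
      rcases lt_trichotomy t 0 with ht | ht | ht
      · rw [Real.sign_of_neg ht]; norm_num
      · rw [ht, Real.sign_zero]; norm_num
      · rw [Real.sign_of_pos ht]; norm_num
    have hg0 : Tendsto (fun Δx : ℝ => C ^ 3 * Δx ^ 2) (𝓝[>] (0:ℝ)) (𝓝 0) := by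
      have : Tendsto (fun Δx : ℝ => C ^ 3 * Δx ^ 2) (𝓝 (0:ℝ)) (𝓝 (C ^ 3 * 0 ^ 2)) :=
        (continuous_const.mul (continuous_pow 2)).continuousAt
      simpa using this.mono_left nhdsWithin_le_nhds
    refine squeeze_zero_norm' ?_ hg0
    filter_upwards [self_mem_nhdsWithin] with Δx hΔx
    have hΔ : (0:ℝ) < Δx := hΔx
    set c := (if |h (x₀ + Δx) - h x₀| ≤ C * Δx then h (x₀ + Δx) - h x₀
      else Real.sign (h (x₀ + Δx) - h x₀) * (C * Δx)) with hc
    have hcb : |c| ≤ C * Δx := by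
      rw [hc]
      split_ifs with hif
      · exact hif
      · rw [abs_mul, abs_of_pos (by positivity : (0:ℝ) < C * Δx)]
        exact mul_le_of_le_one_left (by positivity) (hsign _)
    have h1 : ‖c ^ 3 / Δx‖ = |c| ^ 3 / Δx := by
      rw [Real.norm_eq_abs, abs_div, abs_pow, abs_of_pos hΔ]
    rw [h1]
    have h2 : |c| ^ 3 ≤ (C * Δx) ^ 3 :=
      pow_le_pow_left₀ (abs_nonneg c) hcb 3
    have h3 : (C * Δx) ^ 3 / Δx = C ^ 3 * Δx ^ 2 := by
      field_simp
    calc |c| ^ 3 / Δx ≤ (C * Δx) ^ 3 / Δx := by gcongr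
      _ = C ^ 3 * Δx ^ 2 := h3
  have hB : Tendsto (fun Δx : ℝ =>
      g / 2 * ((if |h (x₀ + Δx) - h x₀| ≤ C * Δx then h (x₀ + Δx) - h x₀
        else Real.sign (h (x₀ + Δx) - h x₀) * (C * Δx)) ^ 3 / Δx) *
        (h x₀ + h (x₀ + Δx))⁻¹) (𝓝[>] (0:ℝ)) (𝓝 0) := by
    have := ((tendsto_const_nhds (x := g / 2) (f := 𝓝[>] (0:ℝ))).mul hcut).mul
      (hden.inv₀ hdenne)
    simpa using this
  have hsum := hA.add hB
  rw [add_zero] at hsum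
  refine hsum.congr fun Δx => ?_
  ring
end

section
/- Let g > 0, k > 0, η = 7/3, Δx > 0, C > 0, μ ∈ ℝ and h > 0. For b > 0 with b ≠ h, define m_c(b) = b − h if |b − h| ≤ CΔx and m_c(b) = sgn(b − h)·CΔx otherwise, and define H(b) := ((b² − h²)/2)·(η+2)/(b^{η+2} − h^{η+2}) − (μ/(kΔx))·m_c(b)·( −1/(h b) + ((h + b)/2)·((b^{η−1} − h^{η−1})/(η−1))·((η+2)/(b^{η+2} − h^{η+2})) ). Then H(b) → h^{−η} as b → h (b ≠ h), i.e. the average h̄^{−η} of the well-balanced friction source term is consistent with h^{−η}. -/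
open Filter Topology

/-- Consistency of the friction average `h̄^{−η}`: with `η = 7/3`, the average
`H(b)` built with the cut-off `m_c(b)` of the height jump at level `CΔx`
tends to `h^{−η}` as `b → h`, `b ≠ h`. -/
theorem friction_average_consistency (g k Δx C μ h : ℝ)
    (hg : 0 < g) (hk : 0 < k) (hΔx : 0 < Δx) (hC : 0 < C) (hh : 0 < h) :
    Tendsto
      (fun b : ℝ =>
        (b ^ 2 - h ^ 2) / 2 *
            (((7 / 3 : ℝ) + 2) / (b ^ ((7 / 3 : ℝ) + 2) - h ^ ((7 / 3 : ℝ) + 2))) -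
          μ / (k * Δx) *
            (if |b - h| ≤ C * Δx then b - h else Real.sign (b - h) * (C * Δx)) *
            (-1 / (h * b) +
              (h + b) / 2 *
                ((b ^ ((7 / 3 : ℝ) - 1) - h ^ ((7 / 3 : ℝ) - 1)) / ((7 / 3 : ℝ) - 1)) *
                (((7 / 3 : ℝ) + 2) / (b ^ ((7 / 3 : ℝ) + 2) - h ^ ((7 / 3 : ℝ) + 2)))))
      (𝓝[≠] h) (𝓝 (h ^ (-(7 / 3 : ℝ)))) := by
  have hne : h ≠ 0 := hh.ne'
  -- generic rpow slope limit
  have slopeR : ∀ r : ℝ, Tendsto (fun b : ℝ => (b ^ r - h ^ r) / (b - h)) (𝓝[≠] h)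
      (𝓝 (r * h ^ (r - 1))) := by
    intro r
    have hd : HasDerivAt (fun x : ℝ => x ^ r) (r * h ^ (r - 1)) h :=
      Real.hasDerivAt_rpow_const (Or.inl hne)
    exact (hasDerivAt_iff_tendsto_slope.mp hd).congr fun b => by
      simp [slope_def_field, div_eq_div_iff]
  have hsp := slopeR ((7 / 3 : ℝ) + 2)
  have hsq := slopeR ((7 / 3 : ℝ) - 1)
  -- nat-pow square slope
  have hs2 : Tendsto (fun b : ℝ => (b ^ 2 - h ^ 2) / (b - h)) (𝓝[≠] h) (𝓝 (2 * h)) := by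
    have hd : HasDerivAt (fun x : ℝ => x ^ 2) (2 * h) h := by
      simpa using hasDerivAt_pow 2 h
    exact (hasDerivAt_iff_tendsto_slope.mp hd).congr fun b => by
      simp [slope_def_field, div_eq_div_iff]
  have hb : Tendsto (fun b : ℝ => b) (𝓝[≠] h) (𝓝 h) :=
    tendsto_id.mono_left nhdsWithin_le_nhds
  -- cutoff → 0
  have hm : Tendsto (fun b : ℝ =>
      (if |b - h| ≤ C * Δx then b - h else Real.sign (b - h) * (C * Δx)))
      (𝓝[≠] h) (𝓝 0) := by
    have hg0 : Tendsto (fun b : ℝ => ‖b - h‖) (𝓝[≠] h) (𝓝 0) := by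
      have h1 : Tendsto (fun b : ℝ => b - h) (𝓝[≠] h) (𝓝 (h - h)) :=
        hb.sub tendsto_const_nhds
      rw [sub_self] at h1
      simpa using h1.norm
    refine squeeze_zero_norm (fun b => ?_) hg0
    by_cases hcase : |b - h| ≤ C * Δx
    · simp [hcase]
    · simp only [hcase, if_false]
      push_neg at hcase
      have h1 : |Real.sign (b - h)| ≤ 1 := by
        rcases Real.sign_apply_eq (b - h) with h' | h' | h' <;> simp [h']
      calc ‖Real.sign (b - h) * (C * Δx)‖ = |Real.sign (b - h)| * |C * Δx| := abs_mul _ _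
        _ ≤ 1 * (C * Δx) := by
            apply mul_le_mul h1 (le_of_eq (abs_of_pos (by positivity))) (abs_nonneg _) one_pos.le
        _ ≤ ‖b - h‖ := by simpa using hcase.le
  -- nonzero denominators at the limit
  have hppos : (0:ℝ) < ((7 / 3 : ℝ) + 2) * h ^ ((7 / 3 : ℝ) + 2 - 1) := by
    have := Real.rpow_pos_of_pos hh ((7 / 3 : ℝ) + 2 - 1); positivity
  have hpne : ((7 / 3 : ℝ) + 2) * h ^ ((7 / 3 : ℝ) + 2 - 1) ≠ 0 := hppos.ne'
  -- tendsto of the slope-form function G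
  have hA : Tendsto (fun b : ℝ => (b ^ 2 - h ^ 2) / (b - h) / 2 *
      (((7 / 3 : ℝ) + 2) / ((b ^ ((7 / 3 : ℝ) + 2) - h ^ ((7 / 3 : ℝ) + 2)) / (b - h))))
      (𝓝[≠] h) (𝓝 (2 * h / 2 *
        (((7 / 3 : ℝ) + 2) / (((7 / 3 : ℝ) + 2) * h ^ ((7 / 3 : ℝ) + 2 - 1))))) :=
    (hs2.div_const 2).mul (tendsto_const_nhds.div hsp hpne)
  have hinv : Tendsto (fun b : ℝ => -1 / (h * b)) (𝓝[≠] h) (𝓝 (-1 / (h * h))) :=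
    tendsto_const_nhds.div (tendsto_const_nhds.mul hb) (by positivity)
  have hBr : Tendsto (fun b : ℝ => -1 / (h * b) + (h + b) / 2 *
      ((b ^ ((7 / 3 : ℝ) - 1) - h ^ ((7 / 3 : ℝ) - 1)) / (b - h) / ((7 / 3 : ℝ) - 1)) *
      (((7 / 3 : ℝ) + 2) / ((b ^ ((7 / 3 : ℝ) + 2) - h ^ ((7 / 3 : ℝ) + 2)) / (b - h))))
      (𝓝[≠] h) (𝓝 (-1 / (h * h) + (h + h) / 2 *
        (((7 / 3 : ℝ) - 1) * h ^ ((7 / 3 : ℝ) - 1 - 1) / ((7 / 3 : ℝ) - 1)) *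
        (((7 / 3 : ℝ) + 2) / (((7 / 3 : ℝ) + 2) * h ^ ((7 / 3 : ℝ) + 2 - 1))))) :=
    hinv.add ((((tendsto_const_nhds.add hb).div_const 2).mul (hsq.div_const _)).mul
      (tendsto_const_nhds.div hsp hpne))
  have hG : Tendsto (fun b : ℝ =>
      (b ^ 2 - h ^ 2) / (b - h) / 2 *
        (((7 / 3 : ℝ) + 2) / ((b ^ ((7 / 3 : ℝ) + 2) - h ^ ((7 / 3 : ℝ) + 2)) / (b - h))) -
      μ / (k * Δx) *
        (if |b - h| ≤ C * Δx then b - h else Real.sign (b - h) * (C * Δx)) *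
        (-1 / (h * b) + (h + b) / 2 *
          ((b ^ ((7 / 3 : ℝ) - 1) - h ^ ((7 / 3 : ℝ) - 1)) / (b - h) / ((7 / 3 : ℝ) - 1)) *
          (((7 / 3 : ℝ) + 2) / ((b ^ ((7 / 3 : ℝ) + 2) - h ^ ((7 / 3 : ℝ) + 2)) / (b - h)))))
      (𝓝[≠] h) (𝓝 (h ^ (-(7 / 3 : ℝ)))) := by
    have := hA.sub ((hm.const_mul (μ / (k * Δx))).mul hBr)
    convert this using 2
    have h10 : h ^ ((7 / 3 : ℝ) + 2 - 1) = h ^ ((10:ℝ)/3) := by norm_num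
    have hexp : h ^ (-(7 / 3 : ℝ)) = h * (h ^ ((10:ℝ)/3))⁻¹ := by
      rw [show (-(7/3) : ℝ) = 1 + -(10/3) by norm_num, Real.rpow_add hh, Real.rpow_one,
        Real.rpow_neg hh.le]
    rw [hexp, h10]
    have hpow : h ^ ((10:ℝ)/3) ≠ 0 := (Real.rpow_pos_of_pos hh _).ne'
    field_simp
    ring
  refine hG.congr' ?_
  filter_upwards [self_mem_nhdsWithin] with b hbne
  have hd : b - h ≠ 0 := sub_ne_zero.mpr hbne
  have keylem : ∀ X Y c : ℝ, X / (b - h) / 2 * (c / (Y / (b - h))) = X / 2 * (c / Y) := by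
    intro X Y c
    rw [div_div_eq_mul_div, mul_comm c (b - h), mul_div_assoc,
      show X / (b - h) / 2 * ((b - h) * (c / Y)) = X / (b - h) * (b - h) * (c / Y / 2) by ring,
      div_mul_cancel₀ X hd]
    ring
  have keylem2 : ∀ Z Y c q : ℝ,
      Z / (b - h) / q * (c / (Y / (b - h))) = Z / q * (c / Y) := by
    intro Z Y c q
    rw [div_div_eq_mul_div, mul_comm c (b - h), mul_div_assoc,
      show Z / (b - h) / q * ((b - h) * (c / Y)) = Z / (b - h) * (b - h) * (c / Y / q) by ring,
      div_mul_cancel₀ Z hd]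
    ring
  rw [keylem, mul_assoc ((h + b) / 2), keylem2]
  ring
end

section
/- Let k ≥ 0, η = 7/3, h₀ > 0 and q₀ ∈ ℝ. Define q : [0, ∞) → ℝ by q(t) = h₀^η q₀ / (h₀^η + k t |q₀|). Then q(0) = q₀ and for every t ≥ 0, q is differentiable at t with q'(t) = −k q(t) |q(t)| h₀^{−η}. In other words, (h(t), q(t)) = (h₀, h₀^η q₀/(h₀^η + k t |q₀|)) is the exact solution of the friction ODE system h' = 0, q' = −k q |q| h^{−η} with initial data (h₀, q₀). -/
/-- Since `A` and the denominator `D` are positive, `|q| = A |q₀| / D`, so the quotient-rule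
derivative `-A q₀ c |q₀| / D²` is `-c q |q| / A`. -/
theorem hasDerivAt_div_add_mul_abs {A c q₀ t : ℝ} (hA : 0 < A)
    (hD : 0 < A + c * t * |q₀|) :
    HasDerivAt (fun s => A * q₀ / (A + c * s * |q₀|))
      (-c * (A * q₀ / (A + c * t * |q₀|)) * |A * q₀ / (A + c * t * |q₀|)| * A⁻¹) t := by
  have hden : HasDerivAt (fun s => A + c * s * |q₀|) (c * |q₀|) t := by
    simpa using (((hasDerivAt_id t).const_mul c).mul_const |q₀|).const_add A
  refine ((hasDerivAt_const t (A * q₀)).div hden hD.ne').congr_deriv ?_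
  rw [abs_div, abs_mul, abs_of_pos hA, abs_of_pos hD]
  field_simp
  ring

/-- Exact solution of the 1D friction ODE: with `η = 7/3`, the function
`q(t) = h₀^η q₀/(h₀^η + k t |q₀|)` satisfies `q(0) = q₀` and
`q'(t) = −k q(t) |q(t)| h₀^{−η}` for all `t ≥ 0`. -/
theorem friction_ode_exact_solution_1d (k h₀ q₀ : ℝ)
    (hk : 0 ≤ k) (hh₀ : 0 < h₀) :
    let η : ℝ := 7 / 3
    let q : ℝ → ℝ := fun t => h₀ ^ η * q₀ / (h₀ ^ η + k * t * |q₀|)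
    q 0 = q₀ ∧ ∀ t : ℝ, 0 ≤ t →
      HasDerivAt q (-k * q t * |q t| * h₀ ^ (-η)) t := by
  intro η q
  have hA : 0 < h₀ ^ η := Real.rpow_pos_of_pos hh₀ η
  refine ⟨by simp [q, hA.ne'], fun t ht => ?_⟩
  rw [Real.rpow_neg hh₀.le]
  exact hasDerivAt_div_add_mul_abs hA (by positivity)
end

section
/- Let k ≥ 0, η = 7/3, h₀ > 0 and q₀ ∈ ℝ². Define q : [0, ∞) → ℝ² by q(t) = h₀^η q₀ / (h₀^η + k t ‖q₀‖), where ‖·‖ is the Euclidean norm on ℝ². Then q(0) = q₀ and for every t ≥ 0, q is differentiable at t with q'(t) = −k q(t) ‖q(t)‖ h₀^{−η}. In other words, (h(t), q(t)) = (h₀, h₀^η q₀/(h₀^η + k t ‖q₀‖)) is the exact solution of the two-dimensional friction ODE system h' = 0, q' = −k q ‖q‖ h^{−η} with initial data (h₀, q₀). -/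
/-! The scalar factor `f t = a / (a + c t)` solves the Riccati equation `f' = -(c / a) f²`, and
for `q = f • v` with `c = k ‖v‖` and `f > 0` one has `‖q‖ = f ‖v‖`, so `q' = f' • v = -(k ‖q‖ / a) • q`. -/

theorem hasDerivAt_div_const_add_mul {a c t : ℝ} (ht : a + c * t ≠ 0) :
    HasDerivAt (fun s => a / (a + c * s)) (-(c / a) * (a / (a + c * t)) ^ 2) t := by
  have hden : HasDerivAt (fun s => a + c * s) c t := by
    simpa using ((hasDerivAt_id t).const_mul c).const_add a
  refine ((hasDerivAt_const t a).fun_div hden ht).congr_deriv ?_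
  field_simp
  ring

theorem hasDerivAt_friction_solution {E : Type*} [NormedAddCommGroup E] [NormedSpace ℝ E]
    {a k t : ℝ} (v : E) (ha : 0 < a) (ht : 0 < a + k * t * ‖v‖) :
    HasDerivAt (fun s => (a / (a + k * s * ‖v‖)) • v)
      ((-(k * ‖(a / (a + k * t * ‖v‖)) • v‖ * a⁻¹)) • (a / (a + k * t * ‖v‖)) • v) t := by
  have hcomm : ∀ s, a + k * s * ‖v‖ = a + k * ‖v‖ * s := fun s => by ring
  have hf := hasDerivAt_div_const_add_mul (c := k * ‖v‖) (hcomm t ▸ ht.ne')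
  simp only [← hcomm] at hf
  convert hf.smul_const v using 1
  rw [smul_smul, norm_smul, Real.norm_of_nonneg (by positivity)]
  congr 1
  field_simp

/-- Exact solution of the 2D friction ODE: with `η = 7/3` and `q₀ ∈ ℝ²`
(Euclidean norm), the function `q(t) = (h₀^η/(h₀^η + k t ‖q₀‖)) q₀`
satisfies `q(0) = q₀` and `q'(t) = −k ‖q(t)‖ h₀^{−η} q(t)` for all `t ≥ 0`. -/
theorem friction_ode_exact_solution_2d (k h₀ : ℝ) (q₀ : EuclideanSpace ℝ (Fin 2))
    (hk : 0 ≤ k) (hh₀ : 0 < h₀) :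
    let η : ℝ := 7 / 3
    let q : ℝ → EuclideanSpace ℝ (Fin 2) :=
      fun t => (h₀ ^ η / (h₀ ^ η + k * t * ‖q₀‖)) • q₀
    q 0 = q₀ ∧ ∀ t : ℝ, 0 ≤ t →
      HasDerivAt q ((-(k * ‖q t‖ * h₀ ^ (-η))) • q t) t := by
  intro η q
  have hpow : 0 < h₀ ^ η := Real.rpow_pos_of_pos hh₀ η
  refine ⟨by simp [q, hpow.ne'], fun t ht => ?_⟩
  rw [Real.rpow_neg hh₀.le]
  exact hasDerivAt_friction_solution q₀ hpow (by positivity)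
end

section
/- Let g > 0. On ℝ², with r² = x² + y², define Z(x, y) = 0.2 e^{0.5(1 − r²)}, h(x, y) = 1 − e^{2(1 − r²)}/(4g) − Z(x, y), u(x, y) = y e^{1 − r²} and v(x, y) = −x e^{1 − r²}. Then these functions form an exact steady solution of the 2D shallow water equations with topography: for all (x, y) ∈ ℝ², (i) ∂_x(hu) + ∂_y(hv) = 0, (ii) ∂_x(hu² + (g/2)h²) + ∂_y(huv) = −g h ∂_x Z, and (iii) ∂_x(huv) + ∂_y(hv² + (g/2)h²) = −g h ∂_y Z. -/
/-!
All fields are functions of `s = x² + y²`: `h = H s`, `Z = B s` and `(u, v) = W s • (y, -x)`, a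
purely rotational flow. Such a flow is divergence free for any profiles, which gives the mass
equation. In the momentum equations the advective terms collapse, by the chain rule in `s`, to the
centrifugal term `h W²`, so each residual is a multiple of `h (2 g (H + B)' - W²)`: the flow is
steady once the free surface `H + B` is in cyclostrophic balance. For the vortex,
`H + B = 1 - e^{2(1-s)}/(4g)` and `W = e^{1-s}`, so `2 g (H + B)' = e^{2(1-s)} = W²`.
-/

section RadialVortex

variable {H B W : ℝ → ℝ} {H' B' W' g x y : ℝ}

theorem hasDerivAt_radial_fst {f : ℝ → ℝ} {f' : ℝ} (hf : HasDerivAt f f' (x ^ 2 + y ^ 2)) :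
    HasDerivAt (fun x' => f (x' ^ 2 + y ^ 2)) (f' * (2 * x)) x :=
  (hf.comp x ((hasDerivAt_pow 2 x).add_const (y ^ 2))).congr_deriv (by ring)

theorem hasDerivAt_radial_snd {f : ℝ → ℝ} {f' : ℝ} (hf : HasDerivAt f f' (x ^ 2 + y ^ 2)) :
    HasDerivAt (fun y' => f (x ^ 2 + y' ^ 2)) (f' * (2 * y)) y :=
  (hf.comp y ((hasDerivAt_pow 2 y).const_add (x ^ 2))).congr_deriv (by ring)

theorem radialVortex_mass_balance (hH : HasDerivAt H H' (x ^ 2 + y ^ 2))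
    (hW : HasDerivAt W W' (x ^ 2 + y ^ 2)) :
    deriv (fun x' => H (x' ^ 2 + y ^ 2) * (y * W (x' ^ 2 + y ^ 2))) x +
        deriv (fun y' => H (x ^ 2 + y' ^ 2) * (-x * W (x ^ 2 + y' ^ 2))) y = 0 := by
  rw [((hasDerivAt_radial_fst hH).fun_mul ((hasDerivAt_radial_fst hW).const_mul y)).deriv,
    ((hasDerivAt_radial_snd hH).fun_mul ((hasDerivAt_radial_snd hW).const_mul (-x))).deriv]
  ring

theorem radialVortex_momentum_fst (hH : HasDerivAt H H' (x ^ 2 + y ^ 2))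
    (hB : HasDerivAt B B' (x ^ 2 + y ^ 2)) (hW : HasDerivAt W W' (x ^ 2 + y ^ 2))
    (hbal : 2 * g * (H' + B') = W (x ^ 2 + y ^ 2) ^ 2) :
    deriv (fun x' => H (x' ^ 2 + y ^ 2) * (y * W (x' ^ 2 + y ^ 2)) ^ 2 +
          g / 2 * H (x' ^ 2 + y ^ 2) ^ 2) x +
        deriv (fun y' => H (x ^ 2 + y' ^ 2) * (y' * W (x ^ 2 + y' ^ 2)) *
          (-x * W (x ^ 2 + y' ^ 2))) y =
      -g * H (x ^ 2 + y ^ 2) * deriv (fun x' => B (x' ^ 2 + y ^ 2)) x := by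
  have hHx := hasDerivAt_radial_fst hH
  have hWx := hasDerivAt_radial_fst hW
  have hHy := hasDerivAt_radial_snd hH
  have hWy := hasDerivAt_radial_snd hW
  rw [((hHx.fun_mul ((hWx.const_mul y).fun_pow 2)).fun_add
      ((hHx.fun_pow 2).const_mul (g / 2))).deriv,
    ((hHy.fun_mul ((hasDerivAt_id' y).fun_mul hWy)).fun_mul (hWy.const_mul (-x))).deriv,
    (hasDerivAt_radial_fst hB).deriv]
  linear_combination x * H (x ^ 2 + y ^ 2) * hbal

theorem radialVortex_momentum_snd (hH : HasDerivAt H H' (x ^ 2 + y ^ 2))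
    (hB : HasDerivAt B B' (x ^ 2 + y ^ 2)) (hW : HasDerivAt W W' (x ^ 2 + y ^ 2))
    (hbal : 2 * g * (H' + B') = W (x ^ 2 + y ^ 2) ^ 2) :
    deriv (fun x' => H (x' ^ 2 + y ^ 2) * (y * W (x' ^ 2 + y ^ 2)) *
          (-x' * W (x' ^ 2 + y ^ 2))) x +
        deriv (fun y' => H (x ^ 2 + y' ^ 2) * (-x * W (x ^ 2 + y' ^ 2)) ^ 2 +
          g / 2 * H (x ^ 2 + y' ^ 2) ^ 2) y =
      -g * H (x ^ 2 + y ^ 2) * deriv (fun y' => B (x ^ 2 + y' ^ 2)) y := by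
  have hHx := hasDerivAt_radial_fst hH
  have hWx := hasDerivAt_radial_fst hW
  have hHy := hasDerivAt_radial_snd hH
  have hWy := hasDerivAt_radial_snd hW
  rw [((hHx.fun_mul (hWx.const_mul y)).fun_mul ((hasDerivAt_id' x).fun_neg.fun_mul hWx)).deriv,
    ((hHy.fun_mul ((hWy.const_mul (-x)).fun_pow 2)).fun_add
      ((hHy.fun_pow 2).const_mul (g / 2))).deriv,
    (hasDerivAt_radial_snd hB).deriv]
  linear_combination y * H (x ^ 2 + y ^ 2) * hbal

end RadialVortex

theorem hasDerivAt_vortex_surface {g : ℝ} (hg : g ≠ 0) (s : ℝ) :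
    HasDerivAt (fun s => 1 - Real.exp (2 * (1 - s)) / (4 * g))
      (Real.exp (1 - s) ^ 2 / (2 * g)) s := by
  refine ((((hasDerivAt_id' s).const_sub 1).const_mul 2).exp.div_const (4 * g)).const_sub 1
    |>.congr_deriv ?_
  rw [← Real.exp_nat_mul]
  field_simp
  ring_nf

/-- The steady vortex is an exact steady solution of the 2D shallow water
equations with topography: with `r² = x² + y²`, `Z = 0.2 e^{0.5(1−r²)}`,
`h = 1 − e^{2(1−r²)}/(4g) − Z`, `u = y e^{1−r²}`, `v = −x e^{1−r²}`,
the mass and both momentum equations hold pointwise. -/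
theorem steady_vortex_exact_solution (g : ℝ) (hg : 0 < g) :
    let Z : ℝ → ℝ → ℝ := fun x y => 0.2 * Real.exp (0.5 * (1 - (x ^ 2 + y ^ 2)))
    let h : ℝ → ℝ → ℝ := fun x y =>
      1 - Real.exp (2 * (1 - (x ^ 2 + y ^ 2))) / (4 * g) - Z x y
    let u : ℝ → ℝ → ℝ := fun x y => y * Real.exp (1 - (x ^ 2 + y ^ 2))
    let v : ℝ → ℝ → ℝ := fun x y => -x * Real.exp (1 - (x ^ 2 + y ^ 2))
    ∀ x y : ℝ,
      (deriv (fun x' => h x' y * u x' y) x +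
          deriv (fun y' => h x y' * v x y') y = 0) ∧
      (deriv (fun x' => h x' y * (u x' y) ^ 2 + g / 2 * (h x' y) ^ 2) x +
          deriv (fun y' => h x y' * u x y' * v x y') y =
        -g * h x y * deriv (fun x' => Z x' y) x) ∧
      (deriv (fun x' => h x' y * u x' y * v x' y) x +
          deriv (fun y' => h x y' * (v x y') ^ 2 + g / 2 * (h x y') ^ 2) y =
        -g * h x y * deriv (fun y' => Z x y') y) := by
  intro Z h u v x y
  have hlin : HasDerivAt (fun s : ℝ => 1 - s) (-1) (x ^ 2 + y ^ 2) :=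
    (hasDerivAt_id' _).const_sub 1
  obtain ⟨B', hB⟩ :
      ∃ B', HasDerivAt (fun s => 0.2 * Real.exp (0.5 * (1 - s))) B' (x ^ 2 + y ^ 2) :=
    ⟨_, ((hlin.const_mul 0.5).exp).const_mul 0.2⟩
  have hH := (hasDerivAt_vortex_surface hg.ne' (x ^ 2 + y ^ 2)).fun_sub hB
  have hW := hlin.exp
  have hbal : 2 * g * (Real.exp (1 - (x ^ 2 + y ^ 2)) ^ 2 / (2 * g) - B' + B') =
      Real.exp (1 - (x ^ 2 + y ^ 2)) ^ 2 := by
    rw [sub_add_cancel]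
    field_simp
  -- Elaborated apart from the goal, so that `H`, `B`, `W` are read off `hH`, `hB`, `hW` instead of
  -- being unified against the let-bound fields (which times out).
  have mass := radialVortex_mass_balance hH hW
  have mom_fst := radialVortex_momentum_fst hH hB hW hbal
  have mom_snd := radialVortex_momentum_snd hH hB hW hbal
  exact ⟨mass, mom_fst, mom_snd⟩
end

section
/- Let g > 0, k > 0 and η = 7/3. On ℝ² \ {(0,0)}, with r = ‖(x, y)‖ = √(x² + y²), define Z(x, y) = (2kr − 1)/(2g r²), h(x, y) = 1, q_x(x, y) = x/r² and q_y(x, y) = y/r². Then these functions form an exact steady solution of the 2D shallow water equations with topography and Manning friction: for all (x, y) ≠ (0, 0), (i) ∂_x q_x + ∂_y q_y = 0, (ii) ∂_x(q_x²/h + (g/2)h²) + ∂_y(q_x q_y/h) = −g h ∂_x Z − k q_x ‖q‖ h^{−η}, and (iii) ∂_x(q_x q_y/h) + ∂_y(q_y²/h + (g/2)h²) = −g h ∂_y Z − k q_y ‖q‖ h^{−η}, where ‖q‖ = √(q_x² + q_y²). -/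
/-!
The discharge `q = (x, y) / r²` is the gradient of the harmonic function `log r`, so it is
divergence free and curl free. For such a field the convective term `∇ · (q ⊗ q)` equals
`(q · ∇) q = ∇ (‖q‖² / 2) = ∇ (1 / (2 r²))`, whose components are `-x / r⁴` and `-y / r⁴`.
The topography `Z = k / (g r) - 1 / (2 g r²)` is chosen so that `-g ∇Z` cancels the friction
`-k q ‖q‖ = -k (x, y) / r³` and leaves exactly `-(x, y) / r⁴`.
-/

open Real

section Calculus

variable {𝕜 : Type*} [NontriviallyNormedField 𝕜]

theorem convective_flux_eq_of_divergence_free_of_curl_free {qx qy : 𝕜 → 𝕜 → 𝕜} {x y a b c d : 𝕜}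
    (hxx : HasDerivAt (fun x' => qx x' y) a x) (hxy : HasDerivAt (fun y' => qx x y') b y)
    (hyx : HasDerivAt (fun x' => qy x' y) c x) (hyy : HasDerivAt (fun y' => qy x y') d y)
    (hdiv : a + d = 0) (hcurl : b = c) :
    deriv (fun x' => qx x' y ^ 2) x + deriv (fun y' => qx x y' * qy x y') y =
        qx x y * a + qy x y * c ∧
      deriv (fun x' => qx x' y * qy x' y) x + deriv (fun y' => qy x y' ^ 2) y =
        qx x y * b + qy x y * d := by
  rw [(hxx.fun_pow 2).deriv, (hxy.fun_mul hyy).deriv, (hxx.fun_mul hyx).deriv,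
    (hyy.fun_pow 2).deriv]
  constructor
  · linear_combination qx x y * hdiv + qy x y * hcurl
  · linear_combination qy x y * hdiv - qx x y * hcurl

variable {x y : 𝕜}

theorem hasDerivAt_sq_add_sq_left : HasDerivAt (fun t => t ^ 2 + y ^ 2) (2 * x) x := by
  simpa using (hasDerivAt_pow 2 x).add_const (y ^ 2)

theorem hasDerivAt_sq_add_sq_right : HasDerivAt (fun t => x ^ 2 + t ^ 2) (2 * y) y := by
  simpa using (hasDerivAt_pow 2 y).const_add (x ^ 2)

theorem hasDerivAt_div_sq_add_sq_left (hs : x ^ 2 + y ^ 2 ≠ 0) :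
    HasDerivAt (fun t => t / (t ^ 2 + y ^ 2)) ((y ^ 2 - x ^ 2) / (x ^ 2 + y ^ 2) ^ 2) x :=
  (hasDerivAt_id' x).fun_div hasDerivAt_sq_add_sq_left hs |>.congr_deriv (by ring)

theorem hasDerivAt_div_sq_add_sq_right (hs : x ^ 2 + y ^ 2 ≠ 0) :
    HasDerivAt (fun t => t / (x ^ 2 + t ^ 2)) ((x ^ 2 - y ^ 2) / (x ^ 2 + y ^ 2) ^ 2) y :=
  (hasDerivAt_id' y).fun_div hasDerivAt_sq_add_sq_right hs |>.congr_deriv (by ring)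

theorem hasDerivAt_const_div_sq_add_sq_left (hs : x ^ 2 + y ^ 2 ≠ 0) :
    HasDerivAt (fun t => y / (t ^ 2 + y ^ 2)) (-(2 * x * y) / (x ^ 2 + y ^ 2) ^ 2) x :=
  (hasDerivAt_const x y).fun_div hasDerivAt_sq_add_sq_left hs |>.congr_deriv (by ring)

theorem hasDerivAt_const_div_sq_add_sq_right (hs : x ^ 2 + y ^ 2 ≠ 0) :
    HasDerivAt (fun t => x / (x ^ 2 + t ^ 2)) (-(2 * x * y) / (x ^ 2 + y ^ 2) ^ 2) y :=
  (hasDerivAt_const y x).fun_div hasDerivAt_sq_add_sq_right hs |>.congr_deriv (by ring)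

end Calculus

theorem sq_add_sq_pos_of_ne_zero {R : Type*} [CommRing R] [LinearOrder R] [IsStrictOrderedRing R]
    {x y : R} (h : (x, y) ≠ (0, 0)) : 0 < x ^ 2 + y ^ 2 := by
  rcases eq_or_ne x 0 with rfl | hx
  · have hy : y ≠ 0 := by rintro rfl; exact h rfl
    positivity
  · positivity

theorem hasDerivAt_topography_profile {g k s : ℝ} (hg : g ≠ 0) (hs : 0 < s) :
    HasDerivAt (fun s => (2 * k * √s - 1) / (2 * g * s)) ((1 - k * √s) / (2 * g * s ^ 2)) s := by
  have hroot : √s ^ 2 = s := sq_sqrt hs.le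
  have hroot_ne : √s ≠ 0 := (sqrt_pos.2 hs).ne'
  refine (((hasDerivAt_sqrt hs.ne').const_mul (2 * k)).sub_const 1).fun_div
    ((hasDerivAt_id' s).const_mul (2 * g)) (by positivity) |>.congr_deriv ?_
  field_simp
  linear_combination -k * hroot

theorem sqrt_div_sq_add_div_sq {x y : ℝ} (hs : 0 < x ^ 2 + y ^ 2) :
    √((x / (x ^ 2 + y ^ 2)) ^ 2 + (y / (x ^ 2 + y ^ 2)) ^ 2) = (√(x ^ 2 + y ^ 2))⁻¹ := by
  rw [← sqrt_inv]
  congr 1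
  field_simp

theorem steady_solution_topography_friction_general (g k : ℝ) (hg : 0 < g) :
    let η : ℝ := 7 / 3
    let Z : ℝ → ℝ → ℝ := fun x y =>
      (2 * k * Real.sqrt (x ^ 2 + y ^ 2) - 1) / (2 * g * (x ^ 2 + y ^ 2))
    let h : ℝ → ℝ → ℝ := fun _ _ => 1
    let qx : ℝ → ℝ → ℝ := fun x y => x / (x ^ 2 + y ^ 2)
    let qy : ℝ → ℝ → ℝ := fun x y => y / (x ^ 2 + y ^ 2)
    ∀ x y : ℝ, (x, y) ≠ (0, 0) →
      (deriv (fun x' => qx x' y) x + deriv (fun y' => qy x y') y = 0) ∧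
      (deriv (fun x' => (qx x' y) ^ 2 / h x' y + g / 2 * (h x' y) ^ 2) x +
          deriv (fun y' => qx x y' * qy x y' / h x y') y =
        -g * h x y * deriv (fun x' => Z x' y) x -
          k * qx x y * Real.sqrt ((qx x y) ^ 2 + (qy x y) ^ 2) * (h x y) ^ (-η)) ∧
      (deriv (fun x' => qx x' y * qy x' y / h x' y) x +
          deriv (fun y' => (qy x y') ^ 2 / h x y' + g / 2 * (h x y') ^ 2) y =
        -g * h x y * deriv (fun y' => Z x y') y -
          k * qy x y * Real.sqrt ((qx x y) ^ 2 + (qy x y) ^ 2) * (h x y) ^ (-η)) := by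
  intro η Z h qx qy x y hxy
  have hs : 0 < x ^ 2 + y ^ 2 := sq_add_sq_pos_of_ne_zero hxy
  have hxx := hasDerivAt_div_sq_add_sq_left hs.ne'
  have hyy := hasDerivAt_div_sq_add_sq_right hs.ne'
  obtain ⟨hconv_x, hconv_y⟩ := convective_flux_eq_of_divergence_free_of_curl_free (qx := qx)
    (qy := qy) hxx (hasDerivAt_const_div_sq_add_sq_right hs.ne')
    (hasDerivAt_const_div_sq_add_sq_left hs.ne') hyy (by ring) rfl
  have hprofile := hasDerivAt_topography_profile (k := k) hg.ne' hs
  have hZx : HasDerivAt (fun x' => Z x' y) _ x := (hprofile.comp x hasDerivAt_sq_add_sq_left :)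
  have hZy : HasDerivAt (fun y' => Z x y') _ y := (hprofile.comp y hasDerivAt_sq_add_sq_right :)
  have hroot : √(x ^ 2 + y ^ 2) ^ 2 = x ^ 2 + y ^ 2 := sq_sqrt hs.le
  have hroot_ne : √(x ^ 2 + y ^ 2) ≠ 0 := (sqrt_pos.2 hs).ne'
  simp only [h, qx, qy, η, div_one, one_pow, mul_one, one_rpow, deriv_add_const,
    sqrt_div_sq_add_div_sq hs, hxx.deriv, hyy.deriv, hconv_x, hconv_y, hZx.deriv, hZy.deriv]
  refine ⟨by ring, ?_, ?_⟩
  · field_simp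
    linear_combination -k * x * (x ^ 2 + y ^ 2) * hroot
  · field_simp
    linear_combination -k * y * (x ^ 2 + y ^ 2) * hroot

/-- Exact steady solution of the 2D shallow water equations with topography
and Manning friction: with `η = 7/3`, `r = √(x² + y²)`,
`Z = (2kr − 1)/(2gr²)`, `h = 1`, `q_x = x/r²`, `q_y = y/r²`, the mass and
both momentum equations hold pointwise on `ℝ² \ {(0,0)}`. -/
theorem steady_solution_topography_friction (g k : ℝ) (hg : 0 < g) (hk : 0 < k) :
    let η : ℝ := 7 / 3
    let Z : ℝ → ℝ → ℝ := fun x y =>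
      (2 * k * Real.sqrt (x ^ 2 + y ^ 2) - 1) / (2 * g * (x ^ 2 + y ^ 2))
    let h : ℝ → ℝ → ℝ := fun _ _ => 1
    let qx : ℝ → ℝ → ℝ := fun x y => x / (x ^ 2 + y ^ 2)
    let qy : ℝ → ℝ → ℝ := fun x y => y / (x ^ 2 + y ^ 2)
    ∀ x y : ℝ, (x, y) ≠ (0, 0) →
      (deriv (fun x' => qx x' y) x + deriv (fun y' => qy x y') y = 0) ∧
      (deriv (fun x' => (qx x' y) ^ 2 / h x' y + g / 2 * (h x' y) ^ 2) x +
          deriv (fun y' => qx x y' * qy x y' / h x y') y =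
        -g * h x y * deriv (fun x' => Z x' y) x -
          k * qx x y * Real.sqrt ((qx x y) ^ 2 + (qy x y) ^ 2) * (h x y) ^ (-η)) ∧
      (deriv (fun x' => qx x' y * qy x' y / h x' y) x +
          deriv (fun y' => (qy x y') ^ 2 / h x y' + g / 2 * (h x y') ^ 2) y =
        -g * h x y * deriv (fun y' => Z x y') y -
          k * qy x y * Real.sqrt ((qx x y) ^ 2 + (qy x y) ^ 2) * (h x y) ^ (-η)) :=
  steady_solution_topography_friction_general g k hg
end
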